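/- For every even k ≥ 2 and every real number c with 1 ≤ c ≤ (2ℓ_k-1)², one has ( c · ∑_{ω ∈ P_{X₋,ℓ_k}} exp( f₀(ω)·(2ℓ_k-1)² ) )^{10} ≤ c · ∑_{ω ∈ P_{X₊,ℓ_k}} exp( f₀(ω)·(2ℓ_k-1)² ); and for every odd k ≥ 3 and every real 1 ≤ c ≤ (2ℓ_k-1)², the same inequality holds with the roles of P_{X₊,ℓ_k} and P_{X₋,ℓ_k} interchanged. (This is the quantitative content of Proposition 5.1: with c = c_{ℓ_k} the number of computation-layer patterns, the two sides are the tenth power of |G_{Ỹ₋,ℓ_k}| and |G_{Ỹ₊,ℓ_k}| respectively.) -/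

import Mathlib

/-- The three-letter alphabet `Σ = {-1, 0, +1}`. -/
inductive Letter : Type
  | neg : Letter
  | zero : Letter
  | pos : Letter
deriving DecidableEq

instance instFintypeLetter : Fintype Letter :=
  ⟨{Letter.neg, Letter.zero, Letter.pos}, fun x => by cases x <;> simp⟩

/-- `f₀(ω)`: the frequency of the symbol `0` in the finite string `ω`. -/
noncomputable def f0 {n : ℕ} (ω : Fin n → Letter) : ℝ :=
  ((Finset.univ.filter fun i => ω i = Letter.zero).card : ℝ) / n

/-- The binary entropy `H(t) = -t log t - (1-t) log (1-t)` (with `0 log 0 = 0`). -/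
noncomputable def H (t : ℝ) : ℝ := -(t * Real.log t) - (1 - t) * Real.log (1 - t)

/-- `η` occurs as a consecutive substring of `ω` starting at position `s`. -/
def occursAt {p n : ℕ} (η : Fin p → Letter) (ω : Fin n → Letter) (s : ℕ) : Prop :=
  ∃ _h : s + p ≤ n, ∀ i : Fin p, η i = ω ⟨s + i.val, by have := i.isLt; omega⟩

/-- `η` occurs as a consecutive substring of `ω`. -/
def occursIn {p n : ℕ} (η : Fin p → Letter) (ω : Fin n → Letter) : Prop :=
  ∃ s, occursAt η ω s

/-- The symbol forbidden at level `k`: `-1` for odd `k`, `+1` for even `k`. -/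
def bad (k : ℕ) : Letter := if k % 2 = 1 then Letter.neg else Letter.pos

/-- The forbidden sets `F_k` of the construction of Section 4: strings of length `2ℓ_k - 1`
containing the bad symbol, or over the good alphabet with frequency of zeros `≥ r_k`,
or over the good alphabet containing a forbidden string of an earlier level of the same parity. -/
def Forb (ℓ : ℕ → ℕ) (r : ℕ → ℚ) (k : ℕ) : Set (Fin (2 * ℓ k - 1) → Letter) :=
  {ω | ∃ i, ω i = bad k} ∪
    {ω | (∀ i, ω i ≠ bad k) ∧ (r k : ℝ) ≤ f0 ω} ∪
    {ω | (∀ i, ω i ≠ bad k) ∧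
      ∃ k' : Fin k, 1 ≤ k'.val ∧ k'.val % 2 = k % 2 ∧
        ∃ η ∈ Forb ℓ r k'.val, occursIn η ω}
termination_by k
decreasing_by exact k'.isLt

open Classical in
/-- The locally admissible strings of length `2n-1`:  no string from `⋃_{k' ≡ parity, k' ≥ 1} F_{k'}`
occurs as a consecutive substring.  `parity = 1` corresponds to `X₊`, `parity = 0` to `X₋`. -/
noncomputable def Padm (ℓ : ℕ → ℕ) (r : ℕ → ℚ) (parity : ℕ) (n : ℕ) :
    Finset (Fin (2 * n - 1) → Letter) :=
  Finset.univ.filter fun ω =>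
    ∀ k, 1 ≤ k → k % 2 = parity → ∀ η ∈ Forb ℓ r k, ¬ occursIn η ω

/-- `m_k = (2ℓ_k - 1)/(2ℓ_{k-1} - 1)`. -/
def mblk (ℓ : ℕ → ℕ) (k : ℕ) : ℕ := (2 * ℓ k - 1) / (2 * ℓ (k - 1) - 1)

open Classical in
/-- Strings of length `N` which are concatenations of `m` blocks of length `L`,
the blocks at the even positions (`0`-based) taken from `B` and the blocks at odd
positions equal to the constant block `g^L`. -/
noncomputable def CfromB {L : ℕ} (N m : ℕ) (g : Letter) (B : Finset (Fin L → Letter)) :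
    Finset (Fin N → Letter) :=
  Finset.univ.filter fun ω => ∀ j < m,
    if j % 2 = 0 then ∃ η ∈ B, occursAt η ω (j * L)
    else occursAt (fun _ : Fin L => g) ω (j * L)

/-- `B₊,k = P_{X₊,ℓ_k} ∖ {(+1)^{2ℓ_k-1}}`. -/
noncomputable def Bplus (ℓ : ℕ → ℕ) (r : ℕ → ℚ) (k : ℕ) :
    Finset (Fin (2 * ℓ k - 1) → Letter) :=
  Padm ℓ r 1 (ℓ k) \ {fun _ => Letter.pos}

/-- `B₋,k = P_{X₋,ℓ_k} ∖ {(-1)^{2ℓ_k-1}}`. -/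
noncomputable def Bminus (ℓ : ℕ → ℕ) (r : ℕ → ℚ) (k : ℕ) :
    Finset (Fin (2 * ℓ k - 1) → Letter) :=
  Padm ℓ r 0 (ℓ k) \ {fun _ => Letter.neg}

/-- `C₊,k`: alternating concatenations of blocks from `B₊,k-1` and constant `+1` blocks. -/
noncomputable def Cplus (ℓ : ℕ → ℕ) (r : ℕ → ℚ) (k : ℕ) :
    Finset (Fin (2 * ℓ k - 1) → Letter) :=
  CfromB (2 * ℓ k - 1) (mblk ℓ k) Letter.pos (Bplus ℓ r (k - 1))

/-- `C₋,k`: alternating concatenations of blocks from `B₋,k-1` and constant `-1` blocks. -/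
noncomputable def Cminus (ℓ : ℕ → ℕ) (r : ℕ → ℚ) (k : ℕ) :
    Finset (Fin (2 * ℓ k - 1) → Letter) :=
  CfromB (2 * ℓ k - 1) (mblk ℓ k) Letter.neg (Bminus ℓ r (k - 1))

/-- The subshift `X_k ⊆ Σ^ℤ`: bi-infinite sequences in which no string of `F_k` occurs. -/
def Xk (ℓ : ℕ → ℕ) (r : ℕ → ℚ) (k : ℕ) : Set (ℤ → Letter) :=
  {x | ∀ η ∈ Forb ℓ r k, ∀ j : ℤ, ¬ (∀ i : Fin (2 * ℓ k - 1), η i = x (j + (i.val : ℤ)))}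

/-- `X₊ = ⋂_{m ≥ 1} X_{2m-1}`. -/
def Xplus (ℓ : ℕ → ℕ) (r : ℕ → ℚ) : Set (ℤ → Letter) :=
  {x | ∀ m, 1 ≤ m → x ∈ Xk ℓ r (2 * m - 1)}

/-- `X₋ = ⋂_{m ≥ 1} X_{2m}`. -/
def Xminus (ℓ : ℕ → ℕ) (r : ℕ → ℚ) : Set (ℤ → Letter) :=
  {x | ∀ m, 1 ≤ m → x ∈ Xk ℓ r (2 * m)}

/-! Strings admissible for the parity of `k` avoid the symbol `bad k` and have zero frequency
below `r k`, so with `L = 2ℓ_k - 1` their weighted sum is at most `2^L exp (r_k L²)`. On the other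
side, the string with zeros exactly at the multiples of `M = 2ℓ_{k-1} - 1` and `bad k` elsewhere is
admissible for the opposite parity: a forbidden word of a level below `k` sees at most one zero,
which by (S1) is too low a frequency to be forbidden. That single string contributes
`exp (L²/M)`, and (S3), (S4) at level `k - 1` give `(L² 2^L exp (r_k L²))^10 ≤ exp (L²/M)`. -/

open Finset

lemma occursIn_refl {n : ℕ} (ω : Fin n → Letter) : occursIn ω ω :=
  ⟨0, by omega, fun i => by simp⟩

lemma occursIn_trans {p q n : ℕ} {η : Fin p → Letter} {θ : Fin q → Letter}
    {ω : Fin n → Letter} (h₁ : occursIn η θ) (h₂ : occursIn θ ω) : occursIn η ω := by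
  obtain ⟨t, ht, hηθ⟩ := h₁
  obtain ⟨s, hs, hθω⟩ := h₂
  refine ⟨s + t, by omega, fun i => ?_⟩
  rw [hηθ i, hθω ⟨t + i, by omega⟩]
  simp only [add_assoc]

lemma f0_mul_length {n : ℕ} (ω : Fin n → Letter) :
    f0 ω * n = #{i | ω i = Letter.zero} := by
  rcases Nat.eq_zero_or_pos n with rfl | hn
  · simp [f0]
  · rw [f0, div_mul_cancel₀ _ (by positivity)]

lemma card_le_two_pow_of_forall_ne {n : ℕ} (S : Finset (Fin n → Letter)) (g : Letter)
    (h : ∀ ω ∈ S, ∀ i, ω i ≠ g) : #S ≤ 2 ^ n := by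
  have hsub : S ⊆ Fintype.piFinset fun _ => univ.erase g := fun ω hω => by
    simpa [Fintype.mem_piFinset] using h ω hω
  calc #S ≤ #(Fintype.piFinset fun _ : Fin n => univ.erase g) := card_le_card hsub
    _ = 2 ^ n := by simp [Fintype.card_piFinset, card_erase_of_mem]; rfl

lemma le_card_filter_dvd_mul {M : ℕ} (n : ℕ) (hM : 0 < M) :
    n ≤ #{i : Fin n | M ∣ (i : ℕ)} * M := by
  have hcount : #{i : Fin n | M ∣ (i : ℕ)} = Nat.count (· ≡ 0 [MOD M]) n := by
    rw [Nat.count_eq_card_filter_range, ← card_map Fin.valEmbedding]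
    congr 1
    ext x
    simp only [mem_map, mem_filter, mem_univ, true_and, Fin.valEmbedding_apply, mem_range,
      Nat.modEq_zero_iff_dvd]
    exact ⟨fun ⟨i, hi, hx⟩ => hx ▸ ⟨i.isLt, hi⟩, fun ⟨hx, hd⟩ => ⟨⟨x, hx⟩, hd, rfl⟩⟩
  rw [hcount, Nat.count_modEq_card _ hM, Nat.zero_mod]
  have hdiv := Nat.div_add_mod n M
  have hmod := Nat.mod_lt n hM
  split_ifs <;> nlinarith

lemma twenty_mul_le_of_two_pow_le {m n : ℕ} (h : 2 ^ (4 * m) ≤ n) :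
    20 * (2 * m - 1) ≤ 2 * n - 1 := by
  rcases m with _ | _ | m
  · omega
  · omega
  · have hm := Nat.lt_two_pow_self (n := m)
    have : 2 ^ m * 2 ^ 8 ≤ 2 ^ (4 * (m + 1 + 1)) := by
      rw [← pow_add]; exact Nat.pow_le_pow_right (by norm_num) (by omega)
    omega

lemma mem_Forb_iff (ℓ : ℕ → ℕ) (r : ℕ → ℚ) (k : ℕ) (ω : Fin (2 * ℓ k - 1) → Letter) :
    ω ∈ Forb ℓ r k ↔ (∃ i, ω i = bad k) ∨
      ((∀ i, ω i ≠ bad k) ∧ (r k : ℝ) ≤ f0 ω) ∨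
      ((∀ i, ω i ≠ bad k) ∧ ∃ k' : Fin k, 1 ≤ k'.val ∧ k'.val % 2 = k % 2 ∧
        ∃ η ∈ Forb ℓ r k'.val, occursIn η ω) := by
  rw [Forb]
  exact or_assoc

lemma mem_Padm_iff {ℓ : ℕ → ℕ} {r : ℕ → ℚ} {p n : ℕ} {ω : Fin (2 * n - 1) → Letter} :
    ω ∈ Padm ℓ r p n ↔ ∀ k, 1 ≤ k → k % 2 = p → ∀ η ∈ Forb ℓ r k, ¬ occursIn η ω := by
  simp [Padm]

lemma bad_ne_zero (k : ℕ) : bad k ≠ Letter.zero := by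
  unfold bad; split <;> simp

lemma bad_ne_bad {k k' : ℕ} (h : k % 2 ≠ k' % 2) : bad k ≠ bad k' := by
  unfold bad
  split_ifs <;> simp_all

section Padm

variable {ℓ : ℕ → ℕ} {r : ℕ → ℚ} {k : ℕ}

lemma not_mem_Forb_of_mem_Padm {ω : Fin (2 * ℓ k - 1) → Letter} (hk : 1 ≤ k)
    (hω : ω ∈ Padm ℓ r (k % 2) (ℓ k)) : ω ∉ Forb ℓ r k :=
  fun hF => mem_Padm_iff.mp hω k hk rfl ω hF (occursIn_refl ω)

lemma ne_bad_of_mem_Padm {ω : Fin (2 * ℓ k - 1) → Letter} (hk : 1 ≤ k)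
    (hω : ω ∈ Padm ℓ r (k % 2) (ℓ k)) (i : Fin (2 * ℓ k - 1)) : ω i ≠ bad k := fun hi =>
  not_mem_Forb_of_mem_Padm hk hω ((mem_Forb_iff ℓ r k ω).mpr (Or.inl ⟨i, hi⟩))

lemma f0_lt_of_mem_Padm {ω : Fin (2 * ℓ k - 1) → Letter} (hk : 1 ≤ k)
    (hω : ω ∈ Padm ℓ r (k % 2) (ℓ k)) : f0 ω < r k := by
  by_contra! hf
  exact not_mem_Forb_of_mem_Padm hk hω
    ((mem_Forb_iff ℓ r k ω).mpr (Or.inr (Or.inl ⟨ne_bad_of_mem_Padm hk hω, hf⟩)))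

lemma sum_exp_f0_mul_le_two_pow_mul_exp {t : ℝ} (hk : 1 ≤ k) (ht : 0 ≤ t) :
    ∑ ω ∈ Padm ℓ r (k % 2) (ℓ k), Real.exp (f0 ω * t) ≤
      2 ^ (2 * ℓ k - 1) * Real.exp (r k * t) := by
  have hcard : #(Padm ℓ r (k % 2) (ℓ k)) ≤ 2 ^ (2 * ℓ k - 1) :=
    card_le_two_pow_of_forall_ne _ (bad k) fun ω hω => ne_bad_of_mem_Padm hk hω
  calc ∑ ω ∈ Padm ℓ r (k % 2) (ℓ k), Real.exp (f0 ω * t)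
      ≤ #(Padm ℓ r (k % 2) (ℓ k)) • Real.exp (r k * t) :=
        sum_le_card_nsmul _ _ _ fun ω hω => by
          gcongr; exact (f0_lt_of_mem_Padm hk hω).le
    _ ≤ 2 ^ (2 * ℓ k - 1) * Real.exp (r k * t) := by
        rw [nsmul_eq_mul]; gcongr; exact_mod_cast hcard

end Padm

def spacedZeros (M : ℕ) (g : Letter) {n : ℕ} : Fin n → Letter :=
  fun i => if M ∣ (i : ℕ) then Letter.zero else g

section spacedZeros

variable {M n : ℕ} {g : Letter}

lemma spacedZeros_eq_zero_iff (hg : g ≠ Letter.zero) (i : Fin n) :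
    spacedZeros M g i = Letter.zero ↔ M ∣ (i : ℕ) := by
  unfold spacedZeros; split_ifs <;> simp_all

lemma inv_le_f0_spacedZeros (hM : 0 < M) (hn : 0 < n) (hg : g ≠ Letter.zero) :
    (M : ℝ)⁻¹ ≤ f0 (spacedZeros M g : Fin n → Letter) := by
  have hcount : n ≤ #{i : Fin n | spacedZeros M g i = Letter.zero} * M := by
    simpa only [spacedZeros_eq_zero_iff hg] using le_card_filter_dvd_mul n hM
  rw [f0, inv_eq_one_div, div_le_div_iff₀ (by positivity) (by positivity), one_mul]
  exact_mod_cast hcount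

lemma card_zero_le_one_of_occursAt_spacedZeros {p s : ℕ} {η : Fin p → Letter}
    (hg : g ≠ Letter.zero) (hpM : p ≤ M) (h : occursAt η (spacedZeros M g : Fin n → Letter) s) :
    #{i | η i = Letter.zero} ≤ 1 := by
  obtain ⟨hs, hη⟩ := h
  have hdvd : ∀ i, η i = Letter.zero → M ∣ s + i := fun i hi => by
    rwa [hη, spacedZeros_eq_zero_iff hg] at hi
  refine card_le_one.mpr fun a ha b hb => ?_
  simp only [mem_filter, mem_univ, true_and] at ha hb
  have hab : (b : ℕ) - a = 0 := Nat.eq_zero_of_dvd_of_lt (a := M)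
    (by rw [← Nat.add_sub_add_left s]; exact Nat.dvd_sub (hdvd b hb) (hdvd a ha)) (by omega)
  have hba : (a : ℕ) - b = 0 := Nat.eq_zero_of_dvd_of_lt (a := M)
    (by rw [← Nat.add_sub_add_left s]; exact Nat.dvd_sub (hdvd a ha) (hdvd b hb)) (by omega)
  omega

lemma spacedZeros_mem_Padm {ℓ : ℕ → ℕ} {r : ℕ → ℚ} {q : ℕ}
    (hg0 : g ≠ Letter.zero) (hg : ∀ k, k % 2 = q → g ≠ bad k)
    (hS1 : ∀ k, 1 ≤ k → 1 < ((2 * ℓ k - 1 : ℕ) : ℝ) * (r k : ℝ))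
    (hfit : ∀ k, 1 ≤ k → k % 2 = q → 2 * ℓ k - 1 ≤ 2 * n - 1 → 2 * ℓ k - 1 ≤ M) :
    spacedZeros M g ∈ Padm ℓ r q n := by
  rw [mem_Padm_iff]
  intro k
  induction k using Nat.strong_induction_on with
  | _ k IH =>
  rintro hk hkq η hη ⟨s, hocc⟩
  rcases (mem_Forb_iff ℓ r k η).mp hη with ⟨i, hi⟩ | ⟨-, hf⟩ | ⟨-, k', hk', hk'q, η', hη', hη'η⟩
  · rw [hocc.2 i] at hi
    unfold spacedZeros at hi
    split_ifs at hi
    · exact bad_ne_zero k hi.symm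
    · exact hg k hkq hi
  · have hzeros := card_zero_le_one_of_occursAt_spacedZeros hg0
      (hfit k hk hkq (by have := hocc.1; omega)) hocc
    have hlen := hS1 k hk
    have : (r k : ℝ) * (2 * ℓ k - 1 : ℕ) ≤ 1 := by
      calc (r k : ℝ) * (2 * ℓ k - 1 : ℕ) ≤ f0 η * (2 * ℓ k - 1 : ℕ) := by gcongr
        _ ≤ 1 := by rw [f0_mul_length]; exact_mod_cast hzeros
    linarith
  · exact IH k' k'.isLt hk' (hk'q.trans hkq) η' hη' (occursIn_trans hη'η ⟨s, hocc⟩)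

end spacedZeros

lemma sq_mul_two_pow_mul_exp_pow_ten_le {L : ℕ} {M r : ℝ} (hM : 0 < M) (hML : 20 * M ≤ L)
    (hr : 10 * (r + 2 * (L : ℝ)⁻¹ ^ 2 * Real.log L) ≤ (2 * M)⁻¹) :
    ((L : ℝ) ^ 2 * (2 ^ L * Real.exp (r * L ^ 2))) ^ 10 ≤ Real.exp (L ^ 2 / M) := by
  have hL : (0 : ℝ) < L := by linarith
  have hsq : (L : ℝ) ^ 2 = Real.exp (2 * Real.log L) := by
    rw [show (2 : ℝ) * Real.log L = ((2 : ℕ) : ℝ) * Real.log L by norm_num, Real.exp_nat_mul,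
      Real.exp_log hL]
  have hpow : (2 : ℝ) ^ L = Real.exp (L * Real.log 2) := by
    rw [Real.exp_nat_mul, Real.exp_log two_pos]
  have hquad : 10 * r * L ^ 2 + 20 * Real.log L ≤ L ^ 2 / (2 * M) := by
    calc 10 * r * L ^ 2 + 20 * Real.log L
        = 10 * (r + 2 * (L : ℝ)⁻¹ ^ 2 * Real.log L) * L ^ 2 := by field_simp; ring
      _ ≤ (2 * M)⁻¹ * L ^ 2 := by gcongr
      _ = L ^ 2 / (2 * M) := inv_mul_eq_div _ _
  have hlin : 10 * L * Real.log 2 ≤ L ^ 2 / (2 * M) := by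
    have hlog2 : Real.log 2 ≤ 1 := (Real.log_two_lt_d9.trans (by norm_num)).le
    rw [le_div_iff₀ (by positivity)]
    nlinarith [mul_le_mul_of_nonneg_left hML hL.le,
      mul_le_mul_of_nonneg_left hlog2 (by positivity : (0 : ℝ) ≤ 20 * M * L)]
  have hhalves : (L : ℝ) ^ 2 / (2 * M) + L ^ 2 / (2 * M) = L ^ 2 / M := by field_simp; ring
  calc ((L : ℝ) ^ 2 * (2 ^ L * Real.exp (r * L ^ 2))) ^ 10
      = Real.exp (((10 : ℕ) : ℝ) * (2 * Real.log L + L * Real.log 2 + r * L ^ 2)) := by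
        rw [Real.exp_nat_mul, hsq, hpow, Real.exp_add, Real.exp_add, mul_assoc]
    _ ≤ Real.exp (L ^ 2 / M) := by
        gcongr
        push_cast
        linarith

lemma pow_ten_mul_sum_exp_le (ℓ : ℕ → ℕ) (r : ℕ → ℚ)
    (hlmono : ∀ k, 1 ≤ k → ℓ k < ℓ (k + 1))
    (hS1 : ∀ k, 1 ≤ k → 1 < ((2 * ℓ k - 1 : ℕ) : ℝ) * (r k : ℝ))
    (hS3 : ∀ k, 1 ≤ k →
      10 * ((r (k + 1) : ℝ) + 2 * (((2 * ℓ (k + 1) - 1 : ℕ) : ℝ))⁻¹ ^ 2 *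
        Real.log ((2 * ℓ (k + 1) - 1 : ℕ) : ℝ)) ≤ ((4 * ℓ k - 2 : ℕ) : ℝ)⁻¹)
    (hS4 : ∀ k, 1 ≤ k → 2 ^ (4 * ℓ k) ≤ ℓ (k + 1))
    {k q : ℕ} (hk : 2 ≤ k) (hq : q ≠ k % 2) {c : ℝ} (hc1 : 1 ≤ c)
    (hc2 : c ≤ ((2 * ℓ k - 1 : ℕ) : ℝ) ^ 2) :
    (c * ∑ ω ∈ Padm ℓ r (k % 2) (ℓ k), Real.exp (f0 ω * ((2 * ℓ k - 1 : ℕ) : ℝ) ^ 2)) ^ 10 ≤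
      c * ∑ ω ∈ Padm ℓ r q (ℓ k), Real.exp (f0 ω * ((2 * ℓ k - 1 : ℕ) : ℝ) ^ 2) := by
  set L := 2 * ℓ k - 1
  set M := 2 * ℓ (k - 1) - 1
  have hk1 : k - 1 + 1 = k := by omega
  have hM : 0 < M := Nat.pos_of_ne_zero fun h => by
    have := hS1 (k - 1) (by omega)
    norm_num [M, h] at this
  have hML : 20 * M ≤ L := twenty_mul_le_of_two_pow_le (hk1 ▸ hS4 (k - 1) (by omega))
  have hmono : StrictMonoOn ℓ (Set.Ici 1) :=
    strictMonoOn_of_lt_succ Set.ordConnected_Ici fun a _ ha _ => hlmono a ha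
  have hfit : ∀ k', 1 ≤ k' → k' % 2 = q → 2 * ℓ k' - 1 ≤ L → 2 * ℓ k' - 1 ≤ M := by
    intro k' hk' hk'q hle
    have hk'k : k' ≤ k := (hmono.le_iff_le hk' (by simp; omega)).mp (by omega)
    have : ℓ k' ≤ ℓ (k - 1) :=
      (hmono.le_iff_le hk' (by simp; omega)).mpr (by omega)
    omega
  have hwit : spacedZeros M (bad k) ∈ Padm ℓ r q (ℓ k) :=
    spacedZeros_mem_Padm (bad_ne_zero k) (fun k' hk' => (bad_ne_bad (by omega)).symm) hS1 hfit
  have hS3k : 10 * ((r k : ℝ) + 2 * (L : ℝ)⁻¹ ^ 2 * Real.log L) ≤ (2 * (M : ℝ))⁻¹ := by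
    have h := hS3 (k - 1) (by omega)
    rwa [hk1, show 4 * ℓ (k - 1) - 2 = 2 * M by omega, Nat.cast_mul, Nat.cast_two] at h
  calc (c * ∑ ω ∈ Padm ℓ r (k % 2) (ℓ k), Real.exp (f0 ω * (L : ℝ) ^ 2)) ^ 10
      ≤ ((L : ℝ) ^ 2 * (2 ^ L * Real.exp (r k * L ^ 2))) ^ 10 := by
        gcongr
        exact sum_exp_f0_mul_le_two_pow_mul_exp (by omega) (by positivity)
    _ ≤ Real.exp (L ^ 2 / M) :=
        sq_mul_two_pow_mul_exp_pow_ten_le (by positivity) (by exact_mod_cast hML) hS3k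
    _ ≤ Real.exp (f0 (spacedZeros M (bad k) : Fin L → Letter) * L ^ 2) := by
        rw [div_eq_inv_mul]
        gcongr
        exact inv_le_f0_spacedZeros hM (by omega) (bad_ne_zero k)
    _ ≤ ∑ ω ∈ Padm ℓ r q (ℓ k), Real.exp (f0 ω * (L : ℝ) ^ 2) :=
        single_le_sum (f := fun ω => Real.exp (f0 ω * (L : ℝ) ^ 2))
          (fun ω _ => (Real.exp_pos _).le) hwit
    _ ≤ c * ∑ ω ∈ Padm ℓ r q (ℓ k), Real.exp (f0 ω * (L : ℝ) ^ 2) :=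
        le_mul_of_one_le_left (sum_nonneg fun ω _ => (Real.exp_pos _).le) hc1

theorem weighted_pattern_inequality_general (ℓ : ℕ → ℕ) (r : ℕ → ℚ)
    (hlmono : ∀ k, 1 ≤ k → ℓ k < ℓ (k + 1))
    (hS1 : ∀ k, 1 ≤ k → 1 < ((2 * ℓ k - 1 : ℕ) : ℝ) * (r k : ℝ))
    (hS3 : ∀ k, 1 ≤ k →
      10 * ((r (k + 1) : ℝ) + 2 * (((2 * ℓ (k + 1) - 1 : ℕ) : ℝ))⁻¹ ^ 2 *
        Real.log ((2 * ℓ (k + 1) - 1 : ℕ) : ℝ)) ≤ ((4 * ℓ k - 2 : ℕ) : ℝ)⁻¹)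
    (hS4 : ∀ k, 1 ≤ k → 2 ^ (4 * ℓ k) ≤ ℓ (k + 1)) :
    (∀ k, 2 ≤ k → k % 2 = 0 → ∀ c : ℝ, 1 ≤ c → c ≤ ((2 * ℓ k - 1 : ℕ) : ℝ) ^ 2 →
      (c * ∑ ω ∈ Padm ℓ r 0 (ℓ k), Real.exp (f0 ω * ((2 * ℓ k - 1 : ℕ) : ℝ) ^ 2)) ^ 10 ≤
        c * ∑ ω ∈ Padm ℓ r 1 (ℓ k), Real.exp (f0 ω * ((2 * ℓ k - 1 : ℕ) : ℝ) ^ 2)) ∧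
    (∀ k, 3 ≤ k → k % 2 = 1 → ∀ c : ℝ, 1 ≤ c → c ≤ ((2 * ℓ k - 1 : ℕ) : ℝ) ^ 2 →
      (c * ∑ ω ∈ Padm ℓ r 1 (ℓ k), Real.exp (f0 ω * ((2 * ℓ k - 1 : ℕ) : ℝ) ^ 2)) ^ 10 ≤
        c * ∑ ω ∈ Padm ℓ r 0 (ℓ k), Real.exp (f0 ω * ((2 * ℓ k - 1 : ℕ) : ℝ) ^ 2)) := by
  refine ⟨fun k hk hpar c hc1 hc2 => ?_, fun k hk hpar c hc1 hc2 => ?_⟩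
  · have h := pow_ten_mul_sum_exp_le ℓ r hlmono hS1 hS3 hS4 hk (q := 1) (by omega) hc1 hc2
    rwa [hpar] at h
  · have h := pow_ten_mul_sum_exp_le ℓ r hlmono hS1 hS3 hS4 (by omega) (q := 0) (by omega) hc1 hc2
    rwa [hpar] at h

theorem weighted_pattern_inequality (ℓ : ℕ → ℕ) (r : ℕ → ℚ)
    (hl1 : ℓ 1 = 4) (hlmono : ∀ k, 1 ≤ k → ℓ k < ℓ (k + 1))
    (hr1 : r 1 = 1 / 2) (hrpos : ∀ k, 1 ≤ k → 0 < r k) (hrhalf : ∀ k, 1 ≤ k → r k ≤ 1 / 2)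
    (hdvd : ∀ k, 2 ≤ k → (2 * ℓ (k - 1) - 1) ∣ (2 * ℓ k - 1))
    (hS1 : ∀ k, 1 ≤ k → 1 < ((2 * ℓ k - 1 : ℕ) : ℝ) * (r k : ℝ))
    (hS2 : ∀ k, 1 ≤ k → 10 * H ((r (k + 1) : ℝ)) ≤ 1 / 2 * (r k : ℝ) * Real.log 2)
    (hS3 : ∀ k, 1 ≤ k →
      10 * ((r (k + 1) : ℝ) + 2 * (((2 * ℓ (k + 1) - 1 : ℕ) : ℝ))⁻¹ ^ 2 *
        Real.log ((2 * ℓ (k + 1) - 1 : ℕ) : ℝ)) ≤ ((4 * ℓ k - 2 : ℕ) : ℝ)⁻¹)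
    (hS4 : ∀ k, 1 ≤ k → 2 ^ (4 * ℓ k) ≤ ℓ (k + 1)) :
    (∀ k, 2 ≤ k → k % 2 = 0 → ∀ c : ℝ, 1 ≤ c → c ≤ ((2 * ℓ k - 1 : ℕ) : ℝ) ^ 2 →
      (c * ∑ ω ∈ Padm ℓ r 0 (ℓ k), Real.exp (f0 ω * ((2 * ℓ k - 1 : ℕ) : ℝ) ^ 2)) ^ 10 ≤
        c * ∑ ω ∈ Padm ℓ r 1 (ℓ k), Real.exp (f0 ω * ((2 * ℓ k - 1 : ℕ) : ℝ) ^ 2)) ∧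
    (∀ k, 3 ≤ k → k % 2 = 1 → ∀ c : ℝ, 1 ≤ c → c ≤ ((2 * ℓ k - 1 : ℕ) : ℝ) ^ 2 →
      (c * ∑ ω ∈ Padm ℓ r 1 (ℓ k), Real.exp (f0 ω * ((2 * ℓ k - 1 : ℕ) : ℝ) ^ 2)) ^ 10 ≤
        c * ∑ ω ∈ Padm ℓ r 0 (ℓ k), Real.exp (f0 ω * ((2 * ℓ k - 1 : ℕ) : ℝ) ^ 2)) :=
  weighted_pattern_inequality_general ℓ r hlmono hS1 hS3 hS4
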